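/- arXiv:1204.5629 — 4 statements merged into one kernel-verified Lean document; each statement's English description precedes it below -/
import Mathlib

section
/- Let N ≥ 1, M ≥ 1, let 0 < t_1 < t_2 < ⋯ < t_M be real times, let x^(1), …, x^(M) ∈ W_N and let ν ∈ W_N. Define the transition density without drift p_N(t, y|x) = (h_N(y)/h_N(x)) q_N(t, y|x), the transition density with drift ν for x, y ∈ W_N by p_N^ν(t, y|x) = e^{−t|ν|²/2} (det_{1≤j,k≤N}[e^{ν_j y_k}] / det_{1≤j,k≤N}[e^{ν_j x_k}]) q_N(t, y|x), and the transition density with drift ν started from the origin by p_N^ν(t, y|0) = t^{−N} (h_N(y/t)/h_N(ν)) q_N(t^{−1}, y/t|ν). Then the following multitime identity holds (reciprocal time relation at the level of finite-dimensional densities): p_N^ν(t_1, x^(1)|0) · ∏_{m=1}^{M−1} p_N^ν(t_{m+1} − t_m, x^(m+1)|x^(m)) = (∏_{m=1}^{M} t_m^{−N}) · p_N(t_M^{−1}, x^(M)/t_M | ν) · ∏_{m=1}^{M−1} p_N(t_m^{−1} − t_{m+1}^{−1}, x^(m)/t_m | x^(m+1)/t_{m+1}), where x/t denotes the coordinatewise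 scaled vector (x_1/t, …, x_N/t). (This is the content of Theorem 1: a dilatation by factor 1/t of the noncolliding Brownian motion with drift ν started with all N particles at the origin is equivalent to the noncolliding Brownian motion without drift started from ν observed at reciprocal time 1/t.) -/
open Finset

/-- One-dimensional Gaussian transition density `p(t, y|x) = (2πt)^{-1/2} exp(-(y-x)²/(2t))`. -/
noncomputable def gauss (t y x : ℝ) : ℝ :=
  Real.exp (-(y - x) ^ 2 / (2 * t)) / Real.sqrt (2 * Real.pi * t)

/-- Karlin–McGregor determinant `q_N(t, y|x) = det[p(t, y_j|x_k)]`. -/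
noncomputable def qKM (N : ℕ) (t : ℝ) (y x : Fin N → ℝ) : ℝ :=
  Matrix.det (Matrix.of fun j k => gauss t (y j) (x k))

/-- Vandermonde product `h_N(x) = ∏_{j<k} (x_k - x_j)`. -/
noncomputable def vdm (N : ℕ) (x : Fin N → ℝ) : ℝ :=
  ∏ p ∈ Finset.univ.filter (fun p : Fin N × Fin N => p.1 < p.2), (x p.2 - x p.1)

/-- `det_{1≤j,k≤N}[e^{ν_j y_k}]`. -/
noncomputable def expDet (N : ℕ) (ν y : Fin N → ℝ) : ℝ :=
  Matrix.det (Matrix.of fun j k => Real.exp (ν j * y k))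

/-- Transition density of noncolliding BM without drift:
`p_N(t, y|x) = (h_N(y)/h_N(x)) q_N(t, y|x)`. -/
noncomputable def pNoDrift (N : ℕ) (t : ℝ) (y x : Fin N → ℝ) : ℝ :=
  (vdm N y / vdm N x) * qKM N t y x

/-- Transition density of noncolliding BM with drift ν:
`p_N^ν(t, y|x) = e^{-t|ν|²/2} (det[e^{ν_j y_k}]/det[e^{ν_j x_k}]) q_N(t, y|x)`. -/
noncomputable def pDrift (N : ℕ) (ν : Fin N → ℝ) (t : ℝ) (y x : Fin N → ℝ) : ℝ :=
  Real.exp (-t * (∑ j, ν j ^ 2) / 2) * (expDet N ν y / expDet N ν x) * qKM N t y x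

/-- Transition density started at the origin:
`p_N^ν(t, y|0) = t^{-N} (h_N(y/t)/h_N(ν)) q_N(t^{-1}, y/t|ν)`. -/
noncomputable def pDriftZero (N : ℕ) (ν : Fin N → ℝ) (t : ℝ) (y : Fin N → ℝ) : ℝ :=
  t ^ (-(N : ℤ)) * (vdm N (fun j => y j / t) / vdm N ν) *
    qKM N t⁻¹ (fun j => y j / t) ν

open Matrix

/-- A nonzero linear combination of `N` distinct exponentials cannot vanish
at `N` strictly increasing points. -/
lemma exp_sum_eq_zero : ∀ (n : ℕ) (a : Fin n → ℝ), Function.Injective a →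
    ∀ (c : Fin n → ℝ) (b : Fin n → ℝ), StrictMono b →
    (∀ k, ∑ j, c j * Real.exp (a j * b k) = 0) → c = 0 := by
  intro n
  induction n with
  | zero => intro a _ c b _ _; ext j; exact j.elim0
  | succ n ih =>
    intro a ha c b hb hzero
    set g : ℝ → ℝ := fun x => ∑ j, c j * Real.exp ((a j - a 0) * x) with hgdef
    have hgzero : ∀ k, g (b k) = 0 := by
      intro k
      have h1 : g (b k) = (∑ j, c j * Real.exp (a j * b k)) * Real.exp (-(a 0) * b k) := by
        rw [Finset.sum_mul]
        refine Finset.sum_congr rfl fun j _ => ?_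
        rw [mul_assoc, ← Real.exp_add]
        ring_nf
      rw [h1, hzero, zero_mul]
    have hderiv : ∀ x : ℝ, HasDerivAt g (∑ j, c j * ((a j - a 0) * Real.exp ((a j - a 0) * x))) x := by
      intro x
      refine HasDerivAt.fun_sum fun j _ => ?_
      have h1 : HasDerivAt (fun x : ℝ => (a j - a 0) * x) (a j - a 0) x := by
        simpa using (hasDerivAt_id x).const_mul (a j - a 0)
      have h2 := (h1.exp).const_mul (c j)
      exact h2.congr_deriv (by ring)
    -- Rolle between consecutive zeros
    have hroll : ∀ k : Fin n, ∃ d ∈ Set.Ioo (b k.castSucc) (b k.succ),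
        (∑ j, c j * ((a j - a 0) * Real.exp ((a j - a 0) * d))) = 0 := by
      intro k
      have hlt : b k.castSucc < b k.succ := hb Fin.castSucc_lt_succ
      obtain ⟨d, hd, hd0⟩ := exists_deriv_eq_zero hlt
        (fun x _ => ((hderiv x).continuousAt).continuousWithinAt)
        (by rw [hgzero, hgzero])
      exact ⟨d, hd, by rw [← (hderiv d).deriv]; exact hd0⟩
    choose d hd hdz using hroll
    have hdmono : StrictMono d := by
      intro k l hkl
      have h1 : d k < b k.succ := (hd k).2
      have h2 : b l.castSucc < d l := (hd l).1
      have h3 : b k.succ ≤ b l.castSucc := by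
        apply hb.monotone
        rw [Fin.le_def, Fin.val_succ, Fin.coe_castSucc]
        exact hkl
      linarith
    have hc' : (fun j : Fin n => c j.succ * (a j.succ - a 0)) = 0 := by
      apply ih (fun j : Fin n => a j.succ - a 0)
        (fun j l h => by
          have h2 : a j.succ = a l.succ := by
            have h3 : a j.succ - a 0 = a l.succ - a 0 := h
            linarith
          exact Fin.succ_injective n (ha h2)) _ d hdmono
      intro k
      have h0 := hdz k
      rw [Fin.sum_univ_succ] at h0
      simp only [sub_self, zero_mul, mul_zero, zero_add] at h0
      rw [← h0]
      exact Finset.sum_congr rfl fun j _ => by ring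
    have hcsucc : ∀ j : Fin n, c j.succ = 0 := by
      intro j
      have h1 := congrFun hc' j
      simp only [Pi.zero_apply, mul_eq_zero] at h1
      rcases h1 with h1 | h1
      · exact h1
      · exact absurd (ha (by linarith [sub_eq_zero.mp h1] : a j.succ = a 0))
          (Fin.succ_ne_zero j)
    have hc0 : c 0 = 0 := by
      have h0 := hzero 0
      rw [Fin.sum_univ_succ] at h0
      simp only [hcsucc, zero_mul, Finset.sum_const_zero, add_zero] at h0
      exact (mul_eq_zero.mp h0).resolve_right (Real.exp_ne_zero _)
    ext j
    refine Fin.cases ?_ ?_ j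
    · exact hc0
    · exact hcsucc

lemma expDet_ne_zero (N : ℕ) {ν y : Fin N → ℝ} (hν : StrictMono ν) (hy : StrictMono y) :
    expDet N ν y ≠ 0 := by
  intro h
  obtain ⟨v, hv, hv0⟩ := Matrix.exists_mulVec_eq_zero_iff.mpr h
  apply hv
  apply exp_sum_eq_zero N y hy.injective v ν hν
  intro k
  have := congrFun hv0 k
  simp only [Matrix.mulVec, dotProduct, Matrix.of_apply, Pi.zero_apply] at this
  rw [← this]
  exact Finset.sum_congr rfl fun j _ => by rw [mul_comm (v j), mul_comm (ν k)]

lemma vdm_pos (N : ℕ) {x : Fin N → ℝ} (hx : StrictMono x) : 0 < vdm N x := by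
  apply Finset.prod_pos
  intro p hp
  simp only [Finset.mem_filter] at hp
  exact sub_pos.mpr (hx hp.2)

lemma scaled_strictMono {N : ℕ} {x : Fin N → ℝ} (hx : StrictMono x) {t : ℝ} (ht : 0 < t) :
    StrictMono fun j => x j / t := fun i j hij =>
  div_lt_div_of_pos_right (hx hij) ht

lemma det_scale (N : ℕ) (r c : Fin N → ℝ) (B : Matrix (Fin N) (Fin N) ℝ) :
    Matrix.det (Matrix.of fun j k => r j * c k * B j k)
      = (∏ j, r j) * ((∏ k, c k) * B.det) := by
  have h : (Matrix.of fun j k => r j * c k * B j k)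
      = Matrix.of (fun j k => r j * (Matrix.of (fun j' k' => c k' * B j' k') j k)) := by
    ext j k; simp [Matrix.of_apply]; ring
  rw [h, Matrix.det_mul_column, Matrix.det_mul_row]

lemma gauss_transform {t t' : ℝ} (ht : 0 < t) (htt' : t < t') (x y : ℝ) :
    gauss (t' - t) y x =
      Real.exp (x ^ 2 / (2 * t)) * (Real.exp (y ^ 2 / (2 * t')))⁻¹ *
        (Real.sqrt (t * t'))⁻¹ * gauss (t⁻¹ - t'⁻¹) (x / t) (y / t') := by
  have ht' : 0 < t' := ht.trans htt'
  have hs : 0 < t' - t := sub_pos.mpr htt'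
  have hu : t⁻¹ - t'⁻¹ = (t' - t) / (t * t') := by field_simp
  have hu0 : 0 < t⁻¹ - t'⁻¹ := by rw [hu]; positivity
  unfold gauss
  have hexp : -(y - x) ^ 2 / (2 * (t' - t)) =
      x ^ 2 / (2 * t) + (-(y ^ 2 / (2 * t'))) + -(x / t - y / t') ^ 2 / (2 * (t⁻¹ - t'⁻¹)) := by
    rw [hu]; field_simp; try ring
  have hsqrt : Real.sqrt (2 * Real.pi * (t' - t)) =
      Real.sqrt (t * t') * Real.sqrt (2 * Real.pi * (t⁻¹ - t'⁻¹)) := by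
    rw [← Real.sqrt_mul (by positivity)]
    congr 1
    rw [hu]; field_simp; try ring
  rw [hexp, Real.exp_add, Real.exp_add, Real.exp_neg, hsqrt]
  have h1 : Real.sqrt (t * t') ≠ 0 := by positivity
  have h2 : Real.sqrt (2 * Real.pi * (t⁻¹ - t'⁻¹)) ≠ 0 := by positivity
  field_simp

lemma gauss_drift {t : ℝ} (ht : 0 < t) (x v : ℝ) :
    gauss t⁻¹ (x / t) v =
      Real.sqrt (t / (2 * Real.pi)) * (Real.exp (x ^ 2 / (2 * t)))⁻¹ *
        Real.exp (-t * v ^ 2 / 2) * Real.exp (v * x) := by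
  unfold gauss
  have hπ : 0 < 2 * Real.pi := by positivity
  have hexp : -(x / t - v) ^ 2 / (2 * t⁻¹) =
      -(x ^ 2 / (2 * t)) + -t * v ^ 2 / 2 + v * x := by
    field_simp; ring
  have hsqrt : Real.sqrt (2 * Real.pi * t⁻¹) = (Real.sqrt (t / (2 * Real.pi)))⁻¹ := by
    rw [← Real.sqrt_inv]
    congr 1
    field_simp
  rw [hexp, Real.exp_add, Real.exp_add, Real.exp_neg, hsqrt]
  have h1 : Real.sqrt (t / (2 * Real.pi)) ≠ 0 := by positivity
  field_simp

lemma qKM_transform (N : ℕ) {t t' : ℝ} (ht : 0 < t) (htt' : t < t') (Y X : Fin N → ℝ) :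
    qKM N (t' - t) Y X =
      ((Real.sqrt (t * t'))⁻¹) ^ N * (Real.exp (∑ j, X j ^ 2 / (2 * t)) *
        ((Real.exp (∑ j, Y j ^ 2 / (2 * t')))⁻¹ *
          qKM N (t⁻¹ - t'⁻¹) (fun j => X j / t) (fun j => Y j / t'))) := by
  unfold qKM
  have h : (Matrix.of fun j k => gauss (t' - t) (Y j) (X k)) =
      Matrix.of (fun j k => ((Real.exp (Y j ^ 2 / (2 * t')))⁻¹ * (Real.sqrt (t * t'))⁻¹) *
        (Real.exp (X k ^ 2 / (2 * t))) *
        ((Matrix.of fun a b => gauss (t⁻¹ - t'⁻¹) (X a / t) (Y b / t'))ᵀ j k)) := by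
    ext j k
    simp only [Matrix.of_apply, Matrix.transpose_apply]
    rw [gauss_transform ht htt' (X k) (Y j)]
    ring
  rw [h, det_scale, Matrix.det_transpose, Finset.prod_mul_distrib,
      Finset.prod_inv_distrib, ← Real.exp_sum, ← Real.exp_sum, Finset.prod_const,
      Finset.card_univ, Fintype.card_fin]
  ring

lemma qKM_drift (N : ℕ) {t : ℝ} (ht : 0 < t) (X ν : Fin N → ℝ) :
    qKM N t⁻¹ (fun j => X j / t) ν =
      (Real.sqrt (t / (2 * Real.pi))) ^ N * ((Real.exp (∑ j, X j ^ 2 / (2 * t)))⁻¹ *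
        (Real.exp (-t * (∑ j, ν j ^ 2) / 2) * expDet N ν X)) := by
  unfold qKM expDet
  have h : (Matrix.of fun j k => gauss t⁻¹ (X j / t) (ν k)) =
      Matrix.of (fun j k => (Real.sqrt (t / (2 * Real.pi)) * (Real.exp (X j ^ 2 / (2 * t)))⁻¹) *
        (Real.exp (-t * ν k ^ 2 / 2)) *
        ((Matrix.of fun a b => Real.exp (ν a * X b))ᵀ j k)) := by
    ext j k
    simp only [Matrix.of_apply, Matrix.transpose_apply]
    rw [gauss_drift ht (X j) (ν k)]
    try ring
  rw [h, det_scale, Matrix.det_transpose, Finset.prod_mul_distrib,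
      Finset.prod_inv_distrib, ← Real.exp_sum, ← Real.exp_sum, Finset.prod_const,
      Finset.card_univ, Fintype.card_fin]
  have h2 : ∑ k, -t * ν k ^ 2 / 2 = -t * (∑ j, ν j ^ 2) / 2 := by
    rw [Finset.mul_sum, Finset.sum_div]
  rw [h2]
  ring

lemma sqrt_const {t t' : ℝ} (ht : 0 < t) (htt' : t < t') :
    Real.sqrt (t / (2 * Real.pi)) = t'⁻¹ * Real.sqrt (t' / (2 * Real.pi)) * Real.sqrt (t * t') := by
  have ht' : 0 < t' := ht.trans htt'
  have hπ : 0 < 2 * Real.pi := by positivity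
  have e1 : Real.sqrt (t * t') = Real.sqrt t * Real.sqrt t' := Real.sqrt_mul ht.le _
  have e2 : Real.sqrt (t / (2 * Real.pi)) = Real.sqrt t / Real.sqrt (2 * Real.pi) :=
    Real.sqrt_div ht.le _
  have e3 : Real.sqrt (t' / (2 * Real.pi)) = Real.sqrt t' / Real.sqrt (2 * Real.pi) :=
    Real.sqrt_div ht'.le _
  have e4 : Real.sqrt t' * Real.sqrt t' = t' := Real.mul_self_sqrt ht'.le
  have hst' : Real.sqrt t' ≠ 0 := by positivity
  have hsπ : Real.sqrt (2 * Real.pi) ≠ 0 := by positivity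
  rw [e1, e2, e3]
  field_simp
  linear_combination (-1 : ℝ) * e4

lemma step (N : ℕ) {ν : Fin N → ℝ} (hν : StrictMono ν) {t t' : ℝ} (ht : 0 < t) (htt' : t < t')
    {X Y : Fin N → ℝ} (hX : StrictMono X) (hY : StrictMono Y) :
    pNoDrift N t⁻¹ (fun j => X j / t) ν * pDrift N ν (t' - t) Y X
      = t' ^ (-(N : ℤ)) * pNoDrift N t'⁻¹ (fun j => Y j / t') ν *
          pNoDrift N (t⁻¹ - t'⁻¹) (fun j => X j / t) (fun j => Y j / t') := by
  have ht' : 0 < t' := ht.trans htt'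
  unfold pNoDrift pDrift
  rw [qKM_drift N ht X ν, qKM_drift N ht' Y ν, qKM_transform N ht htt' Y X]
  have hE : Real.exp (-(t' - t) * (∑ j, ν j ^ 2) / 2)
      = Real.exp (-t' * (∑ j, ν j ^ 2) / 2) * (Real.exp (-t * (∑ j, ν j ^ 2) / 2))⁻¹ := by
    rw [← Real.exp_neg, ← Real.exp_add]; congr 1; ring
  rw [hE]
  have hzpow : (t' : ℝ) ^ (-(N : ℤ)) = (t'⁻¹) ^ N := by
    rw [_root_.zpow_neg, zpow_natCast, inv_pow]
  rw [hzpow, sqrt_const ht htt']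
  have hDX := expDet_ne_zero N hν hX
  have hDY := expDet_ne_zero N hν hY
  have hvν := (vdm_pos N hν).ne'
  have hvX := (vdm_pos N (scaled_strictMono hX ht)).ne'
  have hvY := (vdm_pos N (scaled_strictMono hY ht')).ne'
  have hb : Real.sqrt (t * t') ≠ 0 := by positivity
  have hb' : Real.sqrt (t' * t) ≠ 0 := by positivity
  have hc : Real.sqrt (t' / (2 * Real.pi)) ≠ 0 := by positivity
  have he1 : Real.exp (∑ j, X j ^ 2 / (2 * t)) ≠ 0 := Real.exp_ne_zero _
  have he2 : Real.exp (∑ j, Y j ^ 2 / (2 * t')) ≠ 0 := Real.exp_ne_zero _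
  have he3 : Real.exp (-t * (∑ j, ν j ^ 2) / 2) ≠ 0 := Real.exp_ne_zero _
  have ht'0 : t' ≠ 0 := ht'.ne'
  field_simp
  rw [← mul_pow]
  field_simp
  ring

lemma main_aux (N : ℕ) (ν : Fin N → ℝ) (hν : StrictMono ν) :
    ∀ (M : ℕ) (t : Fin (M + 1) → ℝ), (∀ m, 0 < t m) → StrictMono t →
    ∀ (X : Fin (M + 1) → Fin N → ℝ), (∀ m, StrictMono (X m)) →
    pDriftZero N ν (t 0) (X 0) *
      ∏ m : Fin M, pDrift N ν (t m.succ - t m.castSucc) (X m.succ) (X m.castSucc)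
    = (∏ m, (t m) ^ (-(N : ℤ))) *
        pNoDrift N (t (Fin.last M))⁻¹
          (fun j => X (Fin.last M) j / t (Fin.last M)) ν *
        ∏ m : Fin M,
          pNoDrift N ((t m.castSucc)⁻¹ - (t m.succ)⁻¹)
            (fun j => X m.castSucc j / t m.castSucc)
            (fun j => X m.succ j / t m.succ) := by
  intro M
  induction M with
  | zero =>
    intro t ht htm X hX
    rw [show (Fin.last 0) = 0 from rfl, Fin.prod_univ_succ]
    simp only [Finset.univ_eq_empty, Finset.prod_empty, mul_one]
    unfold pDriftZero pNoDrift
    ring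
  | succ M ih =>
    intro t ht htm X hX
    have hcm : StrictMono (fun m : Fin (M + 1) => t m.castSucc) :=
      fun a b hab => htm (by simpa using hab)
    have hIH := ih (fun m => t m.castSucc) (fun m => ht _) hcm
      (fun m => X m.castSucc) (fun m => hX _)
    simp only [Fin.castSucc_zero] at hIH
    have hstep := step N hν (ht (Fin.last M).castSucc)
      (htm (Fin.castSucc_lt_last (Fin.last M))) (hX (Fin.last M).castSucc)
      (hX (Fin.last (M + 1)))
    rw [Fin.prod_univ_castSucc
        (f := fun m : Fin (M + 1) => pDrift N ν (t m.succ - t m.castSucc) (X m.succ) (X m.castSucc)),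
      Fin.prod_univ_castSucc (f := fun m : Fin (M + 1 + 1) => t m ^ (-(N : ℤ))),
      Fin.prod_univ_castSucc
        (f := fun m : Fin (M + 1) => pNoDrift N ((t m.castSucc)⁻¹ - (t m.succ)⁻¹)
          (fun j => X m.castSucc j / t m.castSucc) (fun j => X m.succ j / t m.succ))]
    simp only [Fin.succ_castSucc, Fin.succ_last]
    linear_combination
      (pDrift N ν (t (Fin.last (M + 1)) - t (Fin.last M).castSucc)
        (X (Fin.last (M + 1))) (X (Fin.last M).castSucc)) * hIH
      + ((∏ m : Fin (M + 1), t m.castSucc ^ (-(N : ℤ))) *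
          ∏ m : Fin M, pNoDrift N ((t m.castSucc.castSucc)⁻¹ - (t m.succ.castSucc)⁻¹)
            (fun j => X m.castSucc.castSucc j / t m.castSucc.castSucc)
            (fun j => X m.succ.castSucc j / t m.succ.castSucc)) * hstep

/-- Reciprocal time relation at the level of finite-dimensional densities
(Theorem 1): for `M+1 ≥ 1` ordered positive times and configurations in the
Weyl chamber, the multitime density of the drifted process started at the
origin equals `∏ t_m^{-N}` times the multitime density of the driftless
process started from ν observed at reciprocal times. -/
theorem reciprocal_time_relation_fdd
    (N M : ℕ) (hN : 1 ≤ N)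
    (t : Fin (M + 1) → ℝ) (ht : ∀ m, 0 < t m) (htmono : StrictMono t)
    (X : Fin (M + 1) → Fin N → ℝ) (hX : ∀ m, StrictMono (X m))
    (ν : Fin N → ℝ) (hν : StrictMono ν) :
    pDriftZero N ν (t 0) (X 0) *
      ∏ m : Fin M, pDrift N ν (t m.succ - t m.castSucc) (X m.succ) (X m.castSucc)
    = (∏ m, (t m) ^ (-(N : ℤ))) *
        pNoDrift N (t (Fin.last M))⁻¹
          (fun j => X (Fin.last M) j / t (Fin.last M)) ν *
        ∏ m : Fin M,
          pNoDrift N ((t m.castSucc)⁻¹ - (t m.succ)⁻¹)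
            (fun j => X m.castSucc j / t m.castSucc)
            (fun j => X m.succ j / t m.succ) := by
  exact main_aux N ν hν M t ht htmono X hX
end

section
/- Let N ≥ 1, let 0 < s < t be real numbers, and let x, y ∈ ℝ^N. Then the Karlin–McGregor determinant satisfies the time-inversion identity q_N(t − s, y|x) = (s t)^{−N/2} · e^{−|y|²/(2t)} · q_N(s^{−1} − t^{−1}, x/s | y/t) · e^{|x|²/(2s)}, where x/s = (x_1/s, …, x_N/s) and y/t = (y_1/t, …, y_N/t). -/
open Finset

lemma gauss_inv (s t : ℝ) (hs : 0 < s) (hst : s < t) (a b : ℝ) :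
    gauss (t - s) b a
      = (s * t) ^ (-(1:ℝ)/2) * Real.exp (-b ^ 2 / (2 * t)) *
        gauss (s⁻¹ - t⁻¹) (a / s) (b / t) * Real.exp (a ^ 2 / (2 * s)) := by
  have ht : 0 < t := hs.trans hst
  have hts : 0 < t - s := by linarith
  have hτ : s⁻¹ - t⁻¹ = (t - s) / (s * t) := by
    field_simp
  have hτpos : 0 < (t - s) / (s * t) := by positivity
  have hpi := Real.pi_pos
  have hC : (s * t : ℝ) ^ (-(1:ℝ)/2) = (Real.sqrt (s * t))⁻¹ := by
    rw [show (-(1:ℝ)/2) = -(1/2) by ring, Real.rpow_neg (by positivity),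
      Real.sqrt_eq_rpow]
  have hsq : Real.sqrt (2 * Real.pi * (t - s))
      = Real.sqrt (2 * Real.pi * ((t - s) / (s * t))) * Real.sqrt (s * t) := by
    rw [← Real.sqrt_mul (by positivity)]
    congr 1
    field_simp
  unfold gauss
  rw [hτ, hC, hsq]
  have hE : -(b - a) ^ 2 / (2 * (t - s))
      = -(a / s - b / t) ^ 2 / (2 * ((t - s) / (s * t))) + -b ^ 2 / (2 * t)
        + a ^ 2 / (2 * s) := by
    field_simp
    ring
  rw [hE, Real.exp_add, Real.exp_add]
  have h1 : Real.sqrt (2 * Real.pi * ((t - s) / (s * t))) ≠ 0 := by positivity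
  have h2 : Real.sqrt (s * t) ≠ 0 := by positivity
  field_simp

/-- Time-inversion identity for the Karlin–McGregor determinant:
`q_N(t−s, y|x) = (st)^{-N/2} e^{-|y|²/(2t)} q_N(s⁻¹−t⁻¹, x/s | y/t) e^{|x|²/(2s)}`. -/
theorem qKM_time_inversion
    (N : ℕ) (hN : 1 ≤ N) (s t : ℝ) (hs : 0 < s) (hst : s < t)
    (x y : Fin N → ℝ) :
    qKM N (t - s) y x
      = (s * t) ^ (-(N : ℝ) / 2) * Real.exp (-(∑ j, y j ^ 2) / (2 * t)) *
          qKM N (s⁻¹ - t⁻¹) (fun j => x j / s) (fun j => y j / t) *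
          Real.exp ((∑ j, x j ^ 2) / (2 * s)) := by
  have ht : 0 < t := hs.trans hst
  set C : ℝ := (s * t) ^ (-(1:ℝ)/2) with hCdef
  set B : Matrix (Fin N) (Fin N) ℝ :=
    Matrix.of fun j k => gauss (s⁻¹ - t⁻¹) (x j / s) (y k / t) with hB
  have hentry : (Matrix.of fun j k => gauss (t - s) (y j) (x k))
      = Matrix.of fun j k => Real.exp (-(y j) ^ 2 / (2 * t)) *
          (Matrix.of fun j' k' => Real.exp ((x k') ^ 2 / (2 * s)) * (C • Matrix.transpose B) j' k') j k := by
    ext j k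
    simp only [Matrix.of_apply, Matrix.smul_apply, Matrix.transpose_apply, Matrix.transpose, hB, smul_eq_mul]
    rw [gauss_inv s t hs hst (x k) (y j)]
    ring
  unfold qKM
  rw [hentry, Matrix.det_mul_column, Matrix.det_mul_row, Matrix.det_smul,
    Matrix.det_transpose]
  have hprod1 : (∏ j, Real.exp (-(y j) ^ 2 / (2 * t)))
      = Real.exp (-(∑ j, y j ^ 2) / (2 * t)) := by
    rw [← Real.exp_sum]
    congr 1
    rw [← Finset.sum_div, ← Finset.sum_neg_distrib]
  have hprod2 : (∏ k, Real.exp ((x k) ^ 2 / (2 * s)))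
      = Real.exp ((∑ j, x j ^ 2) / (2 * s)) := by
    rw [← Real.exp_sum]
    congr 1
    rw [← Finset.sum_div]
  have hCpow : C ^ (Fintype.card (Fin N)) = (s * t) ^ (-(N : ℝ) / 2) := by
    rw [hCdef, Fintype.card_fin, ← Real.rpow_natCast ((s*t) ^ (-(1:ℝ)/2)) N,
      ← Real.rpow_mul (by positivity)]
    congr 1
    ring
  rw [hprod1, hprod2, hCpow]
  have : Matrix.det B = qKM N (s⁻¹ - t⁻¹) (fun j => x j / s) (fun j => y j / t) := rfl
  rw [this]
  ring
end

section
/- Let N ≥ 1, t > 0, y ∈ ℝ^N and ν ∈ ℝ^N. Then t^{−N} q_N(t^{−1}, y/t | ν) = (2πt)^{−N/2} · e^{−t|ν|²/2} · e^{−|y|²/(2t)} · det_{1≤j,k≤N}[e^{ν_j y_k}]. Consequently, for ν ∈ W_N and y ∈ W_N, the density p_N^ν(t, y|0) := e^{−t|ν|²/2} det_{1≤j,k≤N}[e^{ν_j y_k}] (2πt)^{−N/2} e^{−|y|²/(2t)} h_N(y/t)/h_N(ν) of the noncolliding Brownian motion with drift ν started with all particles at the origin equals t^{−N} p_N(t^{−1},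 y/t|ν), where p_N(t, y|x) = (h_N(y)/h_N(x)) q_N(t, y|x) is the transition density of the noncolliding Brownian motion without drift (reciprocal time relation at a single time). -/
open Finset

/-- Single-time reciprocal time relation:
`t^{-N} q_N(t⁻¹, y/t|ν) = (2πt)^{-N/2} e^{-t|ν|²/2} e^{-|y|²/(2t)} det[e^{ν_j y_k}]`,
and consequently, for `ν, y` in the Weyl chamber, the density
`p_N^ν(t, y|0) = e^{-t|ν|²/2} det[e^{ν_j y_k}] (2πt)^{-N/2} e^{-|y|²/(2t)} h_N(y/t)/h_N(ν)`
equals `t^{-N} p_N(t⁻¹, y/t|ν)`. -/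
theorem reciprocal_time_single
    (N : ℕ) (hN : 1 ≤ N) (t : ℝ) (ht : 0 < t) (y ν : Fin N → ℝ) :
    (t ^ (-(N : ℤ)) * qKM N t⁻¹ (fun j => y j / t) ν
      = (2 * Real.pi * t) ^ (-(N : ℝ) / 2) * Real.exp (-t * (∑ j, ν j ^ 2) / 2) *
          Real.exp (-(∑ j, y j ^ 2) / (2 * t)) * expDet N ν y)
    ∧ (StrictMono y → StrictMono ν →
        Real.exp (-t * (∑ j, ν j ^ 2) / 2) * expDet N ν y *
            (2 * Real.pi * t) ^ (-(N : ℝ) / 2) * Real.exp (-(∑ j, y j ^ 2) / (2 * t)) *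
            (vdm N (fun j => y j / t) / vdm N ν)
          = t ^ (-(N : ℤ)) * pNoDrift N t⁻¹ (fun j => y j / t) ν) := by
  have h2pt : (0 : ℝ) < 2 * Real.pi * t := by positivity
  set c : ℝ := (2 * Real.pi * t) ^ (-(1 : ℝ) / 2) with hc
  have hcsqrt : c = (Real.sqrt (2 * Real.pi * t))⁻¹ := by
    rw [hc, show (-1 : ℝ) / 2 = -(1 / 2) by norm_num, Real.rpow_neg h2pt.le,
      Real.sqrt_eq_rpow]
  have entry : ∀ j k : Fin N, t⁻¹ * gauss t⁻¹ (y j / t) (ν k)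
      = (c * Real.exp (-(y j) ^ 2 / (2 * t))) *
        ((Real.exp (-t * (ν k) ^ 2 / 2)) * Real.exp (ν k * y j)) := by
    intro j k
    unfold gauss
    have hs : Real.sqrt (2 * Real.pi * t⁻¹) = Real.sqrt (2 * Real.pi * t) / t := by
      rw [show 2 * Real.pi * t⁻¹ = (2 * Real.pi * t) / t ^ 2 by field_simp,
        Real.sqrt_div h2pt.le, Real.sqrt_sq ht.le]
    have hexp : -(y j / t - ν k) ^ 2 / (2 * t⁻¹)
        = -(y j) ^ 2 / (2 * t) + (-t * (ν k) ^ 2 / 2 + ν k * y j) := by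
      field_simp
      ring
    have hst : (0:ℝ) < Real.sqrt (2 * Real.pi * t) := Real.sqrt_pos.mpr h2pt
    rw [hs, hcsqrt, hexp, Real.exp_add, Real.exp_add]
    field_simp
  have main : t ^ (-(N : ℤ)) * qKM N t⁻¹ (fun j => y j / t) ν
      = (2 * Real.pi * t) ^ (-(N : ℝ) / 2) * Real.exp (-t * (∑ j, ν j ^ 2) / 2) *
          Real.exp (-(∑ j, y j ^ 2) / (2 * t)) * expDet N ν y := by
    have hz : (t : ℝ) ^ (-(N : ℤ)) = t⁻¹ ^ N := by
      rw [zpow_neg, zpow_natCast, inv_pow]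
    rw [qKM, hz, show t⁻¹ ^ N = t⁻¹ ^ Fintype.card (Fin N) by simp, ← Matrix.det_smul]
    have hM : (t⁻¹ • Matrix.of fun j k => gauss t⁻¹ (y j / t) (ν k))
        = Matrix.of (fun j k => (c * Real.exp (-(y j) ^ 2 / (2 * t))) *
            ((fun k => Real.exp (-t * (ν k) ^ 2 / 2)) k *
              (Matrix.of fun j k => Real.exp (ν k * y j)) j k)) := by
      ext j k
      simpa using entry j k
    rw [hM]
    erw [Matrix.det_mul_column (fun j => c * Real.exp (-(y j) ^ 2 / (2 * t)))]
    erw [Matrix.det_mul_row]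
    have hdetT : (Matrix.of fun j k => Real.exp (ν k * y j)).det = expDet N ν y := by
      rw [expDet, ← Matrix.det_transpose]
      rfl
    have hprodc : ∏ j : Fin N, (c * Real.exp (-(y j) ^ 2 / (2 * t)))
        = (2 * Real.pi * t) ^ (-(N : ℝ) / 2) * Real.exp (-(∑ j, y j ^ 2) / (2 * t)) := by
      rw [Finset.prod_mul_distrib, Finset.prod_const, Finset.card_univ, Fintype.card_fin,
        ← Real.exp_sum]
      congr 1
      · rw [hc, ← Real.rpow_natCast ((2 * Real.pi * t) ^ ((-1:ℝ)/2)) N,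
          ← Real.rpow_mul h2pt.le, show (-1:ℝ)/2*(N:ℝ) = -(N:ℝ)/2 by ring]
      · congr 1
        rw [← Finset.sum_neg_distrib, Finset.sum_div]
    have hprodv : ∏ k : Fin N, Real.exp (-t * (ν k) ^ 2 / 2)
        = Real.exp (-t * (∑ j, ν j ^ 2) / 2) := by
      rw [← Real.exp_sum]
      congr 1
      rw [Finset.mul_sum, ← Finset.sum_div]
    rw [hdetT, hprodc, hprodv]
    ring
  refine ⟨main, fun _ _ => ?_⟩
  have : t ^ (-(N : ℤ)) * pNoDrift N t⁻¹ (fun j => y j / t) ν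
      = (vdm N (fun j => y j / t) / vdm N ν) *
        (t ^ (-(N : ℤ)) * qKM N t⁻¹ (fun j => y j / t) ν) := by
    rw [pNoDrift]; ring
  rw [this, main]; ring
end

section
/- Let N ≥ 1, t > 0 and x, y ∈ ℝ^N. Then (1/((2π)^N N!)) ∫_{ℝ^N} e^{−t|k|²/2} det_{1≤j,ℓ≤N}[e^{i k_j x_ℓ}] · det_{1≤j,ℓ≤N}[e^{−i k_j y_ℓ}] dk = det_{1≤j,k≤N}[p(t, y_j | x_k)], i.e., the Karlin–McGregor determinant of Gaussian densities has this symmetrized Fourier integral representation. -/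
open Finset MeasureTheory

lemma cexp_combine (t a b k : ℝ) :
    (Real.exp (-t * k ^ 2 / 2) : ℂ) * Complex.exp (Complex.I * k * a) *
      Complex.exp (-Complex.I * k * b)
    = Complex.exp ((-(t/2) : ℂ) * k ^ 2 + (Complex.I * (a - b)) * k + 0) := by
  rw [Complex.ofReal_exp, ← Complex.exp_add, ← Complex.exp_add]
  congr 1
  push_cast
  ring

lemma integrable1 (t : ℝ) (ht : 0 < t) (a b : ℝ) :
    Integrable (fun k : ℝ => (Real.exp (-t * k ^ 2 / 2) : ℂ) *
      Complex.exp (Complex.I * k * a) * Complex.exp (-Complex.I * k * b)) := by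
  simp_rw [cexp_combine]
  exact integrable_cexp_quadratic' (by simpa using by positivity : ((-(t/2):ℂ)).re < 0) _ _

lemma integral1 (t : ℝ) (ht : 0 < t) (a b : ℝ) :
    ∫ k : ℝ, (Real.exp (-t * k ^ 2 / 2) : ℂ) * Complex.exp (Complex.I * k * a) *
      Complex.exp (-Complex.I * k * b)
    = ((2 * Real.pi) * gauss t b a : ℝ) := by
  simp_rw [cexp_combine]
  rw [integral_cexp_quadratic (by simpa using by positivity : ((-(t/2):ℂ)).re < 0)]
  have h1 : ((Real.pi : ℂ) / -(-((t:ℂ)/2))) = ((2 * Real.pi / t : ℝ) : ℂ) := by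
    push_cast; field_simp
  have h2 : ((0 : ℂ) - (Complex.I * (↑a - ↑b)) ^ 2 / (4 * -(↑t / 2)))
      = ((-(a - b) ^ 2 / (2 * t) : ℝ) : ℂ) := by
    have : (t : ℂ) ≠ 0 := by exact_mod_cast ht.ne'
    field_simp
    ring_nf
    simp [Complex.I_sq]
    ring
    simp [this]
  rw [h1, h2, ← Complex.ofReal_exp]
  have h3 : ((2 * Real.pi / t : ℝ) : ℂ) ^ (1 / 2 : ℂ) = ((Real.sqrt (2 * Real.pi / t) : ℝ) : ℂ) := by
    rw [Real.sqrt_eq_rpow, Complex.ofReal_cpow (by positivity)]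
    norm_num
  rw [h3, ← Complex.ofReal_mul]
  congr 1
  unfold gauss
  have hb : (b - a) ^ 2 = (a - b) ^ 2 := by ring
  rw [hb]
  have key : Real.sqrt (2*Real.pi/t) * Real.sqrt (2*Real.pi*t) = 2*Real.pi := by
    rw [← Real.sqrt_mul (by positivity),
      show (2*Real.pi/t)*(2*Real.pi*t) = (2*Real.pi)^2 by field_simp]
    exact Real.sqrt_sq (by positivity)
  have h4 : Real.sqrt (2*Real.pi*t) ≠ 0 := by positivity
  rw [mul_div_assoc', eq_div_iff h4]
  linear_combination Real.exp (-(a - b) ^ 2 / (2 * t)) * key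

/-- Symmetrized Fourier integral representation of the Karlin–McGregor
determinant of Gaussian densities:
`(1/((2π)^N N!)) ∫_{ℝ^N} e^{-t|k|²/2} det[e^{i k_j x_ℓ}] det[e^{-i k_j y_ℓ}] dk
 = det[p(t, y_j|x_k)]`. -/
theorem qKM_fourier_representation
    (N : ℕ) (hN : 1 ≤ N) (t : ℝ) (ht : 0 < t) (x y : Fin N → ℝ) :
    (((2 * Real.pi) ^ N * (Nat.factorial N) : ℝ) : ℂ)⁻¹ *
        ∫ k : Fin N → ℝ,
          (Real.exp (-t * (∑ j, k j ^ 2) / 2) : ℂ) *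
            Matrix.det (Matrix.of fun j ℓ =>
              Complex.exp (Complex.I * (k j : ℂ) * (x ℓ : ℂ))) *
            Matrix.det (Matrix.of fun j ℓ =>
              Complex.exp (-Complex.I * (k j : ℂ) * (y ℓ : ℂ)))
      = (qKM N t y x : ℂ) := by
  classical
  set ε : Equiv.Perm (Fin N) → ℂ := fun σ => ((Equiv.Perm.sign σ : ℤ) : ℂ) with hε
  -- the per-(σ,τ) integrand
  set F : Equiv.Perm (Fin N) → Equiv.Perm (Fin N) → (Fin N → ℝ) → ℂ :=
    fun σ τ k => ε σ * ε τ *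
      ∏ j, ((Real.exp (-t * (k j) ^ 2 / 2) : ℂ) *
        Complex.exp (Complex.I * (k j : ℂ) * (x (σ j) : ℂ)) *
        Complex.exp (-Complex.I * (k j : ℂ) * (y (τ j) : ℂ))) with hF
  have hdet1 : ∀ k : Fin N → ℝ,
      Matrix.det (Matrix.of fun j ℓ => Complex.exp (Complex.I * (k j : ℂ) * (x ℓ : ℂ)))
      = ∑ σ : Equiv.Perm (Fin N), ε σ * ∏ i, Complex.exp (Complex.I * (k i : ℂ) * (x (σ i) : ℂ)) := by
    intro k
    rw [← Matrix.det_transpose, Matrix.det_apply']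
    rfl
  have hdet2 : ∀ k : Fin N → ℝ,
      Matrix.det (Matrix.of fun j ℓ => Complex.exp (-Complex.I * (k j : ℂ) * (y ℓ : ℂ)))
      = ∑ τ : Equiv.Perm (Fin N), ε τ * ∏ i, Complex.exp (-Complex.I * (k i : ℂ) * (y (τ i) : ℂ)) := by
    intro k
    rw [← Matrix.det_transpose, Matrix.det_apply']
    rfl
  have hA : ∀ k : Fin N → ℝ, (Real.exp (-t * (∑ j, k j ^ 2) / 2) : ℂ)
      = ∏ j, (Real.exp (-t * (k j) ^ 2 / 2) : ℂ) := by
    intro k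
    rw [← Complex.ofReal_prod, ← Real.exp_sum]
    congr 2
    rw [Finset.mul_sum, Finset.sum_div]
  have expand : ∀ k : Fin N → ℝ,
      (Real.exp (-t * (∑ j, k j ^ 2) / 2) : ℂ) *
        Matrix.det (Matrix.of fun j ℓ => Complex.exp (Complex.I * (k j : ℂ) * (x ℓ : ℂ))) *
        Matrix.det (Matrix.of fun j ℓ => Complex.exp (-Complex.I * (k j : ℂ) * (y ℓ : ℂ)))
      = ∑ σ : Equiv.Perm (Fin N), ∑ τ : Equiv.Perm (Fin N), F σ τ k := by
    intro k
    rw [hdet1 k, hdet2 k, mul_assoc, Finset.sum_mul_sum, Finset.mul_sum]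
    refine Finset.sum_congr rfl fun σ _ => ?_
    rw [Finset.mul_sum]
    refine Finset.sum_congr rfl fun τ _ => ?_
    rw [hF]
    simp only
    rw [Finset.prod_mul_distrib, Finset.prod_mul_distrib, hA k]
    ring
  have hInt : ∀ σ τ : Equiv.Perm (Fin N), Integrable (F σ τ) := by
    intro σ τ
    exact (Integrable.fintype_prod (f := fun j (u : ℝ) =>
      (Real.exp (-t * u ^ 2 / 2) : ℂ) * Complex.exp (Complex.I * u * (x (σ j) : ℂ)) *
        Complex.exp (-Complex.I * u * (y (τ j) : ℂ)))
      (fun j => integrable1 t ht (x (σ j)) (y (τ j)))).const_mul _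
  have hFint : ∀ σ τ : Equiv.Perm (Fin N),
      ∫ k : Fin N → ℝ, F σ τ k
      = ε σ * ε τ * (((2 * Real.pi) ^ N : ℝ) : ℂ) *
          ∏ j, ((gauss t (y (τ j)) (x (σ j)) : ℝ) : ℂ) := by
    intro σ τ
    rw [hF]
    simp only
    rw [MeasureTheory.integral_const_mul]
    rw [MeasureTheory.integral_fintype_prod_volume_eq_prod (𝕜 := ℂ) (ι := Fin N)
      (fun j (u : ℝ) => (Real.exp (-t * u ^ 2 / 2) : ℂ) *
        Complex.exp (Complex.I * u * (x (σ j) : ℂ)) *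
        Complex.exp (-Complex.I * u * (y (τ j) : ℂ)))]
    have : ∀ j, (∫ u : ℝ, (Real.exp (-t * u ^ 2 / 2) : ℂ) *
        Complex.exp (Complex.I * u * (x (σ j) : ℂ)) *
        Complex.exp (-Complex.I * u * (y (τ j) : ℂ)))
        = ((2 * Real.pi : ℝ) : ℂ) * ((gauss t (y (τ j)) (x (σ j)) : ℝ) : ℂ) := by
      intro j
      rw [integral1 t ht (x (σ j)) (y (τ j))]
      push_cast
      ring
    rw [Finset.prod_congr rfl fun j _ => this j, Finset.prod_mul_distrib,
      Finset.prod_const, Finset.card_univ, Fintype.card_fin]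
    push_cast
    ring
  -- rewrite the integral
  have hfun : (fun k : Fin N → ℝ =>
      (Real.exp (-t * (∑ j, k j ^ 2) / 2) : ℂ) *
        Matrix.det (Matrix.of fun j ℓ => Complex.exp (Complex.I * (k j : ℂ) * (x ℓ : ℂ))) *
        Matrix.det (Matrix.of fun j ℓ => Complex.exp (-Complex.I * (k j : ℂ) * (y ℓ : ℂ))))
      = fun k => ∑ σ : Equiv.Perm (Fin N), ∑ τ : Equiv.Perm (Fin N), F σ τ k :=
    funext expand
  rw [hfun]
  rw [integral_finset_sum _ (fun σ _ => integrable_finset_sum _ (fun τ _ => hInt σ τ))]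
  have : ∀ σ : Equiv.Perm (Fin N), (∫ k : Fin N → ℝ, ∑ τ : Equiv.Perm (Fin N), F σ τ k)
      = (((2 * Real.pi) ^ N : ℝ) : ℂ) * (qKM N t y x : ℂ) := by
    intro σ
    rw [integral_finset_sum _ (fun τ _ => hInt σ τ)]
    simp_rw [hFint σ]
    -- reindex τ = ρ * σ
    have hsq : ε σ * ε σ = 1 := by
      have h0 : ((Equiv.Perm.sign σ : ℤ)) * ((Equiv.Perm.sign σ : ℤ)) = 1 := by
        rw [← Units.val_mul, Int.units_mul_self]; rfl
      simp only [hε]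
      exact_mod_cast h0
    have key := Fintype.sum_equiv (Equiv.mulRight σ)
      (fun ρ : Equiv.Perm (Fin N) =>
        (((2 * Real.pi) ^ N : ℝ) : ℂ) * (ε ρ * ∏ j, ((gauss t (y (ρ j)) (x j) : ℝ) : ℂ)))
      (fun τ : Equiv.Perm (Fin N) =>
        ε σ * ε τ * (((2 * Real.pi) ^ N : ℝ) : ℂ) * ∏ j, ((gauss t (y (τ j)) (x (σ j)) : ℝ) : ℂ))
      ?_
    · rw [← key, ← Finset.mul_sum]
      congr 1
      rw [qKM, Matrix.det_apply']
      push_cast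
      rfl
    · intro ρ
      have hρσ : (Equiv.mulRight σ) ρ = ρ * σ := rfl
      rw [hρσ]
      have hsgn : ε (ρ * σ) = ε ρ * ε σ := by
        simp only [hε, Equiv.Perm.sign_mul]
        push_cast
        ring
      have happ : ∀ j, (ρ * σ) j = ρ (σ j) := fun _ => rfl
      simp only [happ]
      have hprod : (∏ j, ((gauss t (y (ρ (σ j))) (x (σ j)) : ℝ) : ℂ))
          = ∏ j, ((gauss t (y (ρ j)) (x j) : ℝ) : ℂ) :=
        Equiv.prod_comp σ (fun j => ((gauss t (y (ρ j)) (x j) : ℝ) : ℂ))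
      rw [hsgn, hprod, show ε σ * (ε ρ * ε σ) = ε ρ * (ε σ * ε σ) from by ring, hsq]
      ring
  simp_rw [this]
  rw [Finset.sum_const, Finset.card_univ, Fintype.card_perm, Fintype.card_fin]
  rw [nsmul_eq_mul]
  have hne : (((2 * Real.pi) ^ N * (Nat.factorial N) : ℝ) : ℂ) ≠ 0 := by
    have : ((2 * Real.pi) ^ N * (Nat.factorial N) : ℝ) ≠ 0 := by positivity
    exact_mod_cast this
  calc (((2 * Real.pi) ^ N * (Nat.factorial N) : ℝ) : ℂ)⁻¹ *
        ((Nat.factorial N : ℂ) * ((((2 * Real.pi) ^ N : ℝ) : ℂ) * (qKM N t y x : ℂ)))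
      = (((2 * Real.pi) ^ N * (Nat.factorial N) : ℝ) : ℂ)⁻¹ *
        (((2 * Real.pi) ^ N * (Nat.factorial N) : ℝ) : ℂ) * (qKM N t y x : ℂ) := by
        push_cast; ring
    _ = (qKM N t y x : ℂ) := by rw [inv_mul_cancel₀ hne, one_mul]
end
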